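/- Let ρ be a density matrix on C^d ⊗ C^d and let A, B be d×d Hermitian matrices with A² = I and B² = I. Define vectors a, b ∈ R^{2d²} by taking the real and imaginary parts of the entries of (A ⊗ I)·√ρ and (I ⊗ B)·√ρ respectively. Then a and b are unit vectors and ⟨a, b⟩ = Tr((A ⊗ B)·ρ). -/

import Mathlib

open Matrix
open scoped Kronecker ComplexOrder

noncomputable section

/-- The positive semidefinite square root of a positive semidefinite matrix
(the definition of Mathlib of December 2024, since removed). -/
def Matrix.PosSemidef.sqrt {n 𝕜 : Type*} [Fintype n] [DecidableEq n] [RCLike 𝕜]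
    {A : Matrix n n 𝕜} (hA : A.PosSemidef) : Matrix n n 𝕜 :=
  hA.1.eigenvectorUnitary.1 * diagonal ((↑) ∘ (√·) ∘ hA.1.eigenvalues) *
  (star hA.1.eigenvectorUnitary : Matrix n n 𝕜)

/-!
The vectors `a`, `b` are the entries of `Mₐ = (A ⊗ I)√ρ` and `M_b = (I ⊗ B)√ρ` read as real
vectors, so `⟨a, b⟩ = Re Tr(Mₐ M_bᴴ)`. Since `√ρ` is Hermitian with square `ρ`, this is
`Re Tr((I ⊗ B)(A ⊗ I)ρ) = Re Tr((A ⊗ B)ρ)`, and the trace of a product of two Hermitian matrices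
is real. Likewise `|a|² = Re Tr((A ⊗ I)ᴴ(A ⊗ I)ρ) = Re Tr((A² ⊗ I)ρ) = Tr ρ = 1`, and so for `b`.
-/

namespace Matrix

section Sqrt

variable {n 𝕜 : Type*} [Fintype n] [DecidableEq n] [RCLike 𝕜] {A : Matrix n n 𝕜}

lemma PosSemidef.sqrt_conjTranspose (hA : A.PosSemidef) : hA.sqrtᴴ = hA.sqrt := by
  rw [PosSemidef.sqrt, ← star_eq_conjTranspose, star_mul, star_mul, star_star, Matrix.mul_assoc,
    star_eq_conjTranspose (diagonal _), diagonal_conjTranspose]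
  congr 3
  ext i
  simp

lemma PosSemidef.sqrt_mul_self (hA : A.PosSemidef) : hA.sqrt * hA.sqrt = A := by
  conv_rhs => rw [hA.1.spectral_theorem, Unitary.conjStarAlgAut_apply]
  have hU : (star hA.1.eigenvectorUnitary : Matrix n n 𝕜) * hA.1.eigenvectorUnitary.1 = 1 :=
    Unitary.coe_star_mul_self _
  simp only [PosSemidef.sqrt, Matrix.mul_assoc]
  rw [← Matrix.mul_assoc (star _ : Matrix n n 𝕜) hA.1.eigenvectorUnitary.1, hU, Matrix.one_mul,
    ← Matrix.mul_assoc (diagonal _), diagonal_mul_diagonal]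
  congr 3
  funext i
  simp only [Function.comp_apply]
  rw [← RCLike.ofReal_mul, Real.mul_self_sqrt (hA.eigenvalues_nonneg i)]

lemma PosSemidef.trace_mul_sqrt_mul_conjTranspose (hA : A.PosSemidef) (X Y : Matrix n n 𝕜) :
    ((X * hA.sqrt) * (Y * hA.sqrt)ᴴ).trace = (Yᴴ * X * A).trace := by
  rw [conjTranspose_mul, hA.sqrt_conjTranspose, Matrix.mul_assoc, ← Matrix.mul_assoc hA.sqrt,
    hA.sqrt_mul_self, ← Matrix.mul_assoc, trace_mul_cycle]

end Sqrt

lemma IsHermitian.star_trace_mul {n 𝕜 : Type*} [Fintype n] [RCLike 𝕜] {A B : Matrix n n 𝕜}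
    (hA : A.IsHermitian) (hB : B.IsHermitian) : star (A * B).trace = (A * B).trace := by
  rw [← trace_conjTranspose, conjTranspose_mul, hA.eq, hB.eq, trace_mul_comm]

lemma IsHermitian.kronecker {m n R : Type*} [CommSemiring R] [StarRing R] {A : Matrix m m R}
    {B : Matrix n n R} (hA : A.IsHermitian) (hB : B.IsHermitian) : (A ⊗ₖ B).IsHermitian := by
  rw [IsHermitian, conjTranspose_kronecker, hA.eq, hB.eq]

lemma re_trace_mul_conjTranspose {m n : Type*} [Fintype m] [Fintype n] (M N : Matrix m n ℂ) :
    (M * Nᴴ).trace.re = ∑ i, ∑ j, ((M i j).re * (N i j).re + (M i j).im * (N i j).im) := by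
  simp only [trace, diag_apply, mul_apply, conjTranspose_apply, Complex.re_sum, Complex.mul_re,
    Complex.star_def, Complex.conj_re, Complex.conj_im]
  ring_nf

end Matrix

theorem stmt_18 (d : ℕ) (ρ : Matrix (Fin d × Fin d) (Fin d × Fin d) ℂ)
    (hρ : ρ.PosSemidef) (htr : ρ.trace = 1)
    (A B : Matrix (Fin d) (Fin d) ℂ) (hA : A.IsHermitian) (hB : B.IsHermitian)
    (hA2 : A * A = 1) (hB2 : B * B = 1)
    (MA MB : Matrix (Fin d × Fin d) (Fin d × Fin d) ℂ)
    (hMA : MA = (A ⊗ₖ (1 : Matrix (Fin d) (Fin d) ℂ)) * hρ.sqrt)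
    (hMB : MB = ((1 : Matrix (Fin d) (Fin d) ℂ) ⊗ₖ B) * hρ.sqrt) :
    (∑ i, ∑ j, ((MA i j).re ^ 2 + (MA i j).im ^ 2) = 1) ∧
    (∑ i, ∑ j, ((MB i j).re ^ 2 + (MB i j).im ^ 2) = 1) ∧
    ((∑ i, ∑ j, ((MA i j).re * (MB i j).re + (MA i j).im * (MB i j).im) : ℝ) : ℂ) =
      ((A ⊗ₖ B) * ρ).trace := by
  have hAA : (A ⊗ₖ (1 : Matrix (Fin d) (Fin d) ℂ))ᴴ * (A ⊗ₖ 1) = 1 := by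
    rw [conjTranspose_kronecker, hA.eq, conjTranspose_one, ← mul_kronecker_mul, hA2,
      Matrix.one_mul, one_kronecker_one]
  have hBB : ((1 : Matrix (Fin d) (Fin d) ℂ) ⊗ₖ B)ᴴ * (1 ⊗ₖ B) = 1 := by
    rw [conjTranspose_kronecker, hB.eq, conjTranspose_one, ← mul_kronecker_mul, hB2,
      Matrix.one_mul, one_kronecker_one]
  have hBA : ((1 : Matrix (Fin d) (Fin d) ℂ) ⊗ₖ B)ᴴ * (A ⊗ₖ 1) = A ⊗ₖ B := by
    rw [conjTranspose_kronecker, hB.eq, conjTranspose_one, ← mul_kronecker_mul,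
      Matrix.one_mul, Matrix.mul_one]
  have hAB_real : ((((A ⊗ₖ B) * ρ).trace).re : ℂ) = ((A ⊗ₖ B) * ρ).trace :=
    Complex.conj_eq_iff_re.mp <| (hA.kronecker hB).star_trace_mul hρ.isHermitian
  subst hMA hMB
  simp only [sq, ← re_trace_mul_conjTranspose, hρ.trace_mul_sqrt_mul_conjTranspose, hAA, hBB,
    hBA, Matrix.one_mul, htr, Complex.one_re, hAB_real, and_self]
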